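/- Assume each valuation v_i is concave, differentiable, and homogeneous of degree 1, let ρ ∈ (0,1), let κ > 0 be the identity-creation cost, and define the pricing rule p(y) = ρ·(∑_j q_j y_j)^{1/ρ} for constants q_1,…,q_m ∈ ℝ_{≥0} as in Theorem main. Then for any allocation x and multiplicities η such that (x, p, η) is a Sybil Walrasian equilibrium, every agent i satisfies v_i(x_i) ≤ κ/(1−ρ). -/

import Mathlib

/-! Statement 9: at any Sybil Walrasian equilibrium under the convex pricing
rule of Theorem main (with ρ ∈ (0,1)), every agent's valuation is at most
κ/(1−ρ). -/

/-- A bundle is nonnegative. -/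
def Nonneg {m : ℕ} (y : Fin m → ℝ) : Prop := ∀ j, 0 ≤ y j

/-- A valid allocation. -/
def ValidAlloc {n m : ℕ} (x : Fin n → Fin m → ℝ) : Prop :=
  (∀ i, Nonneg (x i)) ∧ ∀ j, ∑ i, x i j ≤ 1

/-- `y` is in the (quasilinear) demand set for valuation `v` and pricing rule `p`. -/
def InDemand {m : ℕ} (v p : (Fin m → ℝ) → ℝ) (y : Fin m → ℝ) : Prop :=
  Nonneg y ∧ ∀ z, Nonneg z → v z - p z ≤ v y - p y

/-- Good `j` has nonzero cost under pricing rule `p`. -/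
def NonzeroCost {m : ℕ} (p : (Fin m → ℝ) → ℝ) (j : Fin m) : Prop :=
  ∃ y : Fin m → ℝ, Nonneg y ∧ (∀ l, l ≠ j → y l = 0) ∧ 0 < p y

/-- `(x, p)` is a Walrasian equilibrium. -/
def IsWE {n m : ℕ} (v : Fin n → (Fin m → ℝ) → ℝ) (p : (Fin m → ℝ) → ℝ)
    (x : Fin n → Fin m → ℝ) : Prop :=
  (∀ i, InDemand (v i) p (x i)) ∧ ValidAlloc x ∧
    ∀ j, NonzeroCost p j → ∑ i, x i j = 1

/-- CES welfare `Φ(ρ, x)`. -/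
noncomputable def CES {n m : ℕ} (v : Fin n → (Fin m → ℝ) → ℝ) (ρ : ℝ)
    (x : Fin n → Fin m → ℝ) : ℝ :=
  (∑ i, v i (x i) ^ ρ) ^ (1 / ρ)

/-- `x ∈ Ψ(ρ)`. -/
def MaxCES {n m : ℕ} (v : Fin n → (Fin m → ℝ) → ℝ) (ρ : ℝ)
    (x : Fin n → Fin m → ℝ) : Prop :=
  ValidAlloc x ∧ ∀ y, ValidAlloc y → CES v ρ y ≤ CES v ρ x

/-- Homogeneity of degree `r` on the nonnegative orthant. -/
def Homog {m : ℕ} (r : ℝ) (v : (Fin m → ℝ) → ℝ) : Prop :=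
  ∀ y, Nonneg y → ∀ c : ℝ, 0 ≤ c → v (c • y) = c ^ r * v y

/-- Monotone valuation. -/
def MonotoneVal {m : ℕ} (v : (Fin m → ℝ) → ℝ) : Prop :=
  ∀ y z : Fin m → ℝ, Nonneg y → Nonneg z → (∀ j, y j ≤ z j) → v y ≤ v z

/-- Nonzero valuation. -/
def NonzeroVal {m : ℕ} (v : (Fin m → ℝ) → ℝ) : Prop :=
  ∃ y, Nonneg y ∧ 0 < v y

/-- Differentiability: all partial derivatives exist at every point of the
nonnegative orthant. -/
def DiffVal {m : ℕ} (v : (Fin m → ℝ) → ℝ) : Prop :=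
  ∀ y : Fin m → ℝ, Nonneg y → ∀ j, ∃ d : ℝ,
    HasDerivWithinAt (fun t => v (Function.update y j t)) d (Set.Ici 0) (y j)

/-- Sybil utility for purchasing bundle `y` with each of `η` identities,
with identity-creation cost `κ`. -/
def SybilU {m : ℕ} (v p : (Fin m → ℝ) → ℝ) (κ : ℝ) (y : Fin m → ℝ) (η : ℕ) : ℝ :=
  v ((η : ℝ) • y) - (η : ℝ) * p y - (η : ℝ) * κ

/-- `(y, η)` is in the Sybil demand set. -/
def InSybilDemand {m : ℕ} (v p : (Fin m → ℝ) → ℝ) (κ : ℝ)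
    (y : Fin m → ℝ) (η : ℕ) : Prop :=
  Nonneg y ∧ 1 ≤ η ∧ ∀ (z : Fin m → ℝ) (μ : ℕ), Nonneg z → 1 ≤ μ →
    SybilU v p κ z μ ≤ SybilU v p κ y η


/-- `(x, p, η)` is a Sybil Walrasian equilibrium, where the goods with nonzero
cost are those with `q j > 0`. -/
def IsSWE {n m : ℕ} (v : Fin n → (Fin m → ℝ) → ℝ) (p : (Fin m → ℝ) → ℝ) (κ : ℝ)
    (x : Fin n → Fin m → ℝ) (η : Fin n → ℕ) (q : Fin m → ℝ) : Prop :=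
  (∀ i, InSybilDemand (v i) p κ (x i) (η i)) ∧ (∀ i, Nonneg (x i)) ∧
    (∀ j, ∑ i, x i j ≤ 1) ∧ ∀ j, 0 < q j → ∑ i, x i j = 1

/-! Since `v` is homogeneous of degree one, an agent's Sybil utility with `η` identities is
`η · (v y − p y − κ)`. Rescaling the per-identity bundle along its ray gives the first-order
condition `p y = ρ · v y` for the power pricing rule, while opening one more identity shows that
`v y − p y − κ ≤ 0`; together, `(1 − ρ) · v y ≤ κ`. -/

theorem Nonneg.smul {m : ℕ} {y : Fin m → ℝ} (hy : Nonneg y) {t : ℝ} (ht : 0 ≤ t) :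
    Nonneg (t • y) :=
  fun j => mul_nonneg ht (hy j)

theorem Homog.map_smul {m : ℕ} {v : (Fin m → ℝ) → ℝ} (hv : Homog 1 v) {y : Fin m → ℝ}
    (hy : Nonneg y) {t : ℝ} (ht : 0 ≤ t) : v (t • y) = t * v y := by
  rw [hv y hy t ht, Real.rpow_one]

section SybilDemand

variable {m : ℕ} {v p : (Fin m → ℝ) → ℝ} {κ : ℝ} {y : Fin m → ℝ} {η : ℕ}

theorem sybilU_of_homog (hv : Homog 1 v) (hy : Nonneg y) (η : ℕ) :
    SybilU v p κ y η = η * (v y - p y - κ) := by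
  rw [SybilU, hv.map_smul hy η.cast_nonneg]
  ring

theorem InSybilDemand.smul_le (hv : Homog 1 v) (hd : InSybilDemand v p κ y η) {t : ℝ}
    (ht : 0 ≤ t) : t * v y - p (t • y) ≤ v y - p y := by
  obtain ⟨hy, hη, hopt⟩ := hd
  have h := hopt (t • y) η (hy.smul ht) hη
  rw [sybilU_of_homog hv (hy.smul ht), sybilU_of_homog hv hy, hv.map_smul hy ht] at h
  have hη0 : (0 : ℝ) < η := by exact_mod_cast hη
  linarith [le_of_mul_le_mul_left h hη0]

theorem InSybilDemand.sub_sub_nonpos (hv : Homog 1 v) (hd : InSybilDemand v p κ y η) :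
    v y - p y - κ ≤ 0 := by
  obtain ⟨hy, hη, hopt⟩ := hd
  have h := hopt y (η + 1) hy (by omega)
  rw [sybilU_of_homog hv hy, sybilU_of_homog hv hy] at h
  push_cast at h
  linarith

end SybilDemand

theorem price_smul {m : ℕ} {q : Fin m → ℝ} (hq : ∀ j, 0 ≤ q j) {c r : ℝ}
    {p : (Fin m → ℝ) → ℝ} (hp : ∀ y, p y = c * (∑ j, q j * y j) ^ r) {y : Fin m → ℝ}
    (hy : Nonneg y) {t : ℝ} (ht : 0 ≤ t) : p (t • y) = t ^ r * p y := by
  have hsum : ∑ j, q j * (t • y) j = t * ∑ j, q j * y j := by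
    rw [Finset.mul_sum]
    exact Finset.sum_congr rfl fun j _ => by simp only [Pi.smul_apply, smul_eq_mul]; ring
  rw [hp, hp, hsum, Real.mul_rpow ht (Finset.sum_nonneg fun j _ => mul_nonneg (hq j) (hy j))]
  ring

theorem eq_mul_of_forall_mul_sub_rpow_le {a b r : ℝ}
    (h : ∀ t : ℝ, 0 < t → t * a - t ^ r * b ≤ a - b) : a = r * b := by
  have hmax : IsLocalMax (fun t : ℝ => t * a - t ^ r * b) 1 := by
    filter_upwards [Ioi_mem_nhds one_pos] with t ht
    simpa using h t ht
  have hderiv : HasDerivAt (fun t : ℝ => t * a - t ^ r * b) (a - r * b) 1 := by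
    have h := ((hasDerivAt_id (1 : ℝ)).mul_const a).sub
      ((Real.hasDerivAt_rpow_const (x := 1) (p := r) (Or.inl one_ne_zero)).mul_const b)
    rwa [Real.one_rpow, mul_one, one_mul] at h
  linarith [hmax.hasDerivAt_eq_zero hderiv]

theorem stmt9_general {n m : ℕ} (v : Fin n → (Fin m → ℝ) → ℝ) (ρ κ : ℝ)
    (hρ0 : 0 < ρ) (hρ1 : ρ < 1)
    (hhom : ∀ i, Homog 1 (v i))
    (q : Fin m → ℝ) (hq : ∀ j, 0 ≤ q j)
    (p : (Fin m → ℝ) → ℝ) (hp : ∀ y, p y = ρ * (∑ j, q j * y j) ^ (1 / ρ)) :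
    ∀ (x : Fin n → Fin m → ℝ) (η : Fin n → ℕ), IsSWE v p κ x η q →
      ∀ i, v i (x i) ≤ κ / (1 - ρ) := by
  intro x η hswe i
  have hd := hswe.1 i
  have hfoc : v i (x i) = 1 / ρ * p (x i) :=
    eq_mul_of_forall_mul_sub_rpow_le fun t ht => by
      simpa [price_smul hq hp hd.1 ht.le] using hd.smul_le (hhom i) ht.le
  have hprice : p (x i) = ρ * v i (x i) := by
    rw [hfoc]; field_simp
  rw [le_div_iff₀ (sub_pos.2 hρ1)]
  linarith [hd.sub_sub_nonpos (hhom i)]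

theorem stmt9 {n m : ℕ} (v : Fin n → (Fin m → ℝ) → ℝ) (ρ κ : ℝ)
    (hρ0 : 0 < ρ) (hρ1 : ρ < 1) (hκ : 0 < κ)
    (hnz : ∀ i, NonzeroVal (v i)) (hmono : ∀ i, MonotoneVal (v i))
    (hnorm : ∀ i, v i 0 = 0)
    (hhom : ∀ i, Homog 1 (v i))
    (hconc : ∀ i, ConcaveOn ℝ {y : Fin m → ℝ | Nonneg y} (v i))
    (hdiff : ∀ i, DiffVal (v i))
    (q : Fin m → ℝ) (hq : ∀ j, 0 ≤ q j)
    (p : (Fin m → ℝ) → ℝ) (hp : ∀ y, p y = ρ * (∑ j, q j * y j) ^ (1 / ρ))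
    -- q are "as in Theorem main": (x₀, p) is a WE for some x₀ ∈ Ψ(ρ)
    (x₀ : Fin n → Fin m → ℝ) (hmax : MaxCES v ρ x₀) (hwe : IsWE v p x₀) :
    ∀ (x : Fin n → Fin m → ℝ) (η : Fin n → ℕ), IsSWE v p κ x η q →
      ∀ i, v i (x i) ≤ κ / (1 - ρ) :=
  stmt9_general v ρ κ hρ0 hρ1 hhom q hq p hp
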